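/- Let E be a (Z,ψ,L)-Schwarzenberger bundle on X, so S = H⁰(L), T = H⁰(L⊗ψ*U^∨), and φ: T* → S*⊗H⁰(F₀^∨) is dual to the multiplication map. Then for each point z ∈ Z, the pair (L_z*, (ψ*U)_z), consisting of the rk(L)-dimensional subspace L_z* ⊆ H⁰(L)* and the f₀-dimensional subspace (ψ*U)_z ⊆ H⁰(F₀^∨), satisfies L_z*⊗(ψ*U)_z ⊆ im φ; i.e., each point of Z gives a jumping pair of E. -/

import Mathlib

/-!
For `l ∈ L_z^*` and `b ∈ (ψ*U)_z`, the functional `τ ↦ l (τ(z)(b))` on `T` is mapped by `φ`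
to `(l ∘ ev_z) ⊗ b`: pairing with `ξ ∈ H*` and using that `φ` is dual to multiplication, both
sides become `l((σ·ξ)(z)(b)) = ξ(b) · l(σ(z))`. The dimension count holds because the dual
of the surjection `ev_z : H⁰(L) ↠ L_z` is injective.
-/

open Module LinearMap

theorem LinearMap.finrank_range_dualMap_of_surjective {K V W : Type*} [Field K]
    [AddCommGroup V] [Module K V] [AddCommGroup W] [Module K W]
    {f : V →ₗ[K] W} (hf : Function.Surjective f) :
    finrank K (range f.dualMap) = finrank K W := by
  rw [finrank_range_dualMap_eq_finrank_range, range_eq_top.mpr hf, finrank_top]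

theorem smulRight_dualMap_mem_range_of_dual_mult {K S H T F : Type*} [Field K]
    [AddCommGroup S] [Module K S] [AddCommGroup H] [Module K H]
    [AddCommGroup T] [Module K T] [AddCommGroup F] [Module K F]
    {W : Submodule K H} {mult : S →ₗ[K] Dual K H →ₗ[K] T} {evT : T →ₗ[K] W →ₗ[K] F}
    {ev : S →ₗ[K] F} (hcompat : ∀ σ ξ (w : W), evT (mult σ ξ) w = ξ w • ev σ)
    {φ : Dual K T →ₗ[K] S →ₗ[K] H} (hφ : ∀ τ σ (ξ : Dual K H), ξ (φ τ σ) = τ (mult σ ξ))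
    (l : Dual K F) {b : H} (hb : b ∈ W) :
    (ev.dualMap l).smulRight b ∈ range φ := by
  refine ⟨l ∘ₗ applyₗ (⟨b, hb⟩ : W) ∘ₗ evT, ext fun σ ↦ eval_apply_injective K ?_⟩
  ext ξ
  simp [hφ, hcompat, mul_comm]

theorem statement8_general
    (k : Type*) [Field k]
    (Z : Type*) (f₀ a : ℕ)
    (H : Type*) [AddCommGroup H] [Module k H]
    -- S = H⁰(L) and T = H⁰(L ⊗ ψ*U^∨)
    (S : Type*) [AddCommGroup S] [Module k S]
    (T : Type*) [AddCommGroup T] [Module k T]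
    -- the subspaces (ψ*U)_z ⊆ H⁰(F₀^∨), of dimension f₀
    (ψ : Z → Submodule k H) (hψ : ∀ z, Module.finrank k (ψ z) = f₀)
    -- the fibres of L (of rank a) with surjective evaluation maps
    (Lf : Z → Type*) [∀ z, AddCommGroup (Lf z)] [∀ z, Module k (Lf z)]
    (hLf : ∀ z, Module.finrank k (Lf z) = a)
    (evL : ∀ z, S →ₗ[k] Lf z) (hevL : ∀ z, Function.Surjective (evL z))
    -- the multiplication map H⁰(L) ⊗ H⁰(ψ*U^∨) → H⁰(L ⊗ ψ*U^∨), with H⁰(ψ*U^∨) ≅ H*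
    (mult : S →ₗ[k] (Dual k H →ₗ[k] T))
    -- evaluation of H⁰(L ⊗ ψ*U^∨) at z (fibre in Hom-form), compatible with mult
    (evT : ∀ z, T →ₗ[k] ((ψ z) →ₗ[k] Lf z))
    (hcompat : ∀ z (σ : S) (ξ : Dual k H) (w : ψ z),
      evT z (mult σ ξ) w = ξ (w : H) • evL z σ)
    -- φ : T* → S* ⊗ H⁰(F₀^∨) (Hom-form) is dual to the multiplication map
    (φ : Dual k T →ₗ[k] (S →ₗ[k] H))
    (hφ : ∀ (τ : Dual k T) (σ : S) (ξ : Dual k H), ξ (φ τ σ) = τ (mult σ ξ)) :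
    ∀ z : Z,
      Module.finrank k (LinearMap.range (evL z).dualMap) = a ∧
      Module.finrank k (ψ z) = f₀ ∧
      ∀ aϝ ∈ LinearMap.range (evL z).dualMap, ∀ b ∈ ψ z,
        aϝ.smulRight b ∈ LinearMap.range φ := by
  intro z
  refine ⟨?_, hψ z, ?_⟩
  · rw [finrank_range_dualMap_of_surjective (hevL z), hLf z]
  · rintro _ ⟨l, rfl⟩ b hb
    exact smulRight_dualMap_mem_range_of_dual_mult (hcompat z) hφ l hb

theorem statement8
    (k : Type*) [Field k] [IsAlgClosed k] [CharZero k]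
    (Z : Type*) (f₀ a : ℕ)
    (H : Type*) [AddCommGroup H] [Module k H] [FiniteDimensional k H]
    -- S = H⁰(L) and T = H⁰(L ⊗ ψ*U^∨)
    (S : Type*) [AddCommGroup S] [Module k S] [FiniteDimensional k S]
    (T : Type*) [AddCommGroup T] [Module k T] [FiniteDimensional k T]
    -- the subspaces (ψ*U)_z ⊆ H⁰(F₀^∨), of dimension f₀
    (ψ : Z → Submodule k H) (hψ : ∀ z, Module.finrank k (ψ z) = f₀)
    -- the fibres of L (of rank a) with surjective evaluation maps
    (Lf : Z → Type*) [∀ z, AddCommGroup (Lf z)] [∀ z, Module k (Lf z)]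
    [∀ z, FiniteDimensional k (Lf z)]
    (hLf : ∀ z, Module.finrank k (Lf z) = a)
    (evL : ∀ z, S →ₗ[k] Lf z) (hevL : ∀ z, Function.Surjective (evL z))
    -- the multiplication map H⁰(L) ⊗ H⁰(ψ*U^∨) → H⁰(L ⊗ ψ*U^∨), with H⁰(ψ*U^∨) ≅ H*
    (mult : S →ₗ[k] (Dual k H →ₗ[k] T))
    -- evaluation of H⁰(L ⊗ ψ*U^∨) at z (fibre in Hom-form), compatible with mult
    (evT : ∀ z, T →ₗ[k] ((ψ z) →ₗ[k] Lf z))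
    (hcompat : ∀ z (σ : S) (ξ : Dual k H) (w : ψ z),
      evT z (mult σ ξ) w = ξ (w : H) • evL z σ)
    -- φ : T* → S* ⊗ H⁰(F₀^∨) (Hom-form) is dual to the multiplication map
    (φ : Dual k T →ₗ[k] (S →ₗ[k] H))
    (hφ : ∀ (τ : Dual k T) (σ : S) (ξ : Dual k H), ξ (φ τ σ) = τ (mult σ ξ)) :
    ∀ z : Z,
      Module.finrank k (LinearMap.range (evL z).dualMap) = a ∧
      Module.finrank k (ψ z) = f₀ ∧
      ∀ aϝ ∈ LinearMap.range (evL z).dualMap, ∀ b ∈ ψ z,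
        aϝ.smulRight b ∈ LinearMap.range φ :=
  statement8_general k Z f₀ a H S T ψ hψ Lf hLf evL hevL mult evT hcompat φ hφ
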